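/- Assume γ, η ≤ 1/10 and let (A,B) ∈ I be a (γ,η)-good edge. Then a random B' ∼ W_I(A) is likely to belong to a large bucket: Pr_{B'∼W_I(A)}[B' belongs to a large bucket Γ_i for some 0 ≤ i ≤ ℓ] ≥ 1/2. -/

import Mathlib

/-!
Goodness of the edge and `Corr ≤ p_cons` on `N_I(A)` give `p_tot(A) ≥ γη·|N_I(A)|`. The sets `B'`
with `p_cons(B') ≤ 2^{-ℓ-1}` carry at most `2^{-ℓ-1}·|N_I(A)| ≤ (γη)^5·|N_I(A)|/2`; every other `B'`
lies in a bucket `Γ_i` with `i ≤ ℓ`, where `p_cons ≤ 2^{-i}`, so the small buckets carry at most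
`∑_i (γη)^5·|N_I(A)|·2^{-i} ≤ 2(γη)^5·|N_I(A)|`. As `(5/2)(γη)^5 ≤ γη/2`, the weight outside the
large buckets is at most `p_tot(A)/2`.
-/

open Finset
open scoped Classical
namespace IJKW
noncomputable def prEvent {n : ℕ} (D : ((Fin n → Bool) → Bool) → ℝ)
    (E : ((Fin n → Bool) → Bool) → Prop) : ℝ :=
  ∑ v : (Fin n → Bool) → Bool, if E v then D v else 0
def Sk (n k : ℕ) : Finset (Finset (Fin n → Bool)) :=
  Finset.univ.filter fun B => B.card = k
noncomputable def Corr {n : ℕ} (g : (Fin n → Bool) → Bool)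
    (G : Finset (Fin n → Bool) → ((Fin n → Bool) → Bool) → ℝ)
    (B : Finset (Fin n → Bool)) : ℝ :=
  prEvent (G B) fun v => ∀ x ∈ B, v x = g x
def NI (n k : ℕ) (A : Finset (Fin n → Bool)) : Finset (Finset (Fin n → Bool)) :=
  (Sk n k).filter fun B => A ⊆ B
def NIx (n k : ℕ) (A : Finset (Fin n → Bool)) (x : Fin n → Bool) :
    Finset (Finset (Fin n → Bool)) :=
  (Sk n k).filter fun B => A ⊆ B ∧ x ∈ B
def Edges (n k : ℕ) : Finset (Finset (Fin n → Bool) × Finset (Fin n → Bool)) :=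
  Finset.univ.filter fun p => p.1.card = k / 2 ∧ p.2.card = k ∧ p.1 ⊆ p.2
noncomputable def pcons {n : ℕ} (g : (Fin n → Bool) → Bool)
    (G : Finset (Fin n → Bool) → ((Fin n → Bool) → Bool) → ℝ)
    (A B : Finset (Fin n → Bool)) : ℝ :=
  prEvent (G B) fun v => ∀ a ∈ A, v a = g a
def IsGood {n : ℕ} (g : (Fin n → Bool) → Bool)
    (G : Finset (Fin n → Bool) → ((Fin n → Bool) → Bool) → ℝ)
    (k : ℕ) (γ η : ℝ) (A B : Finset (Fin n → Bool)) : Prop :=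
  η ≤ Corr g G B ∧
    γ ≤ (((NI n k A).filter fun B' => η ≤ Corr g G B').card : ℝ) / ((NI n k A).card : ℝ)

-- extra definitions
/-- `p_tot(A) = ∑_{B' ∈ N_I(A)} p_cons(B')`. -/
noncomputable def ptot {n : ℕ} (g : (Fin n → Bool) → Bool)
    (G : Finset (Fin n → Bool) → ((Fin n → Bool) → Bool) → ℝ)
    (k : ℕ) (A : Finset (Fin n → Bool)) : ℝ :=
  ∑ B ∈ NI n k A, pcons g G A B

/-- Expectation of `F` under the distribution `W_I(A)`, which assigns `B' ∈ N_I(A)` the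
probability `p_cons(B') / p_tot(A)`. -/
noncomputable def Wexp {n : ℕ} (g : (Fin n → Bool) → Bool)
    (G : Finset (Fin n → Bool) → ((Fin n → Bool) → Bool) → ℝ)
    (k : ℕ) (A : Finset (Fin n → Bool)) (F : Finset (Fin n → Bool) → ℝ) : ℝ :=
  (∑ B ∈ NI n k A, pcons g G A B * F B) / ptot g G k A

/-- `p_err(x, B') = Pr_{v ∼ 𝒢(B')}[v|_x ≠ g(x) ∣ v|_A = g^{k/2}(A)]`. -/
noncomputable def perr {n : ℕ} (g : (Fin n → Bool) → Bool)
    (G : Finset (Fin n → Bool) → ((Fin n → Bool) → Bool) → ℝ)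
    (A : Finset (Fin n → Bool)) (x : Fin n → Bool) (B : Finset (Fin n → Bool)) : ℝ :=
  prEvent (G B) (fun v => v x ≠ g x ∧ ∀ a ∈ A, v a = g a) / pcons g G A B

/-- `ErrCons(A, B') = E_{x ∼ uniform on B'∖A}[p_err(x, B')]`. -/
noncomputable def ErrCons {n : ℕ} (g : (Fin n → Bool) → Bool)
    (G : Finset (Fin n → Bool) → ((Fin n → Bool) → Bool) → ℝ)
    (A B : Finset (Fin n → Bool)) : ℝ :=
  (∑ x ∈ B \ A, perr g G A x B) / ((B \ A).card : ℝ)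

/-- An edge `(A,B)` is `(γ,η,α)`-excellent if it is `(γ,η)`-good and
`E_{B' ∼ W_I(A)}[ErrCons(A,B')] ≤ α`. -/
def IsExcellent {n : ℕ} (g : (Fin n → Bool) → Bool)
    (G : Finset (Fin n → Bool) → ((Fin n → Bool) → Bool) → ℝ)
    (k : ℕ) (γ η α : ℝ) (A B : Finset (Fin n → Bool)) : Prop :=
  IsGood g G k γ η A B ∧ Wexp g G k A (fun B' => ErrCons g G A B') ≤ α

/-- `p_tot(x) = ∑_{B ∈ N_I(A,x)} p_cons(B)`. -/
noncomputable def ptotx {n : ℕ} (g : (Fin n → Bool) → Bool)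
    (G : Finset (Fin n → Bool) → ((Fin n → Bool) → Bool) → ℝ)
    (k : ℕ) (A : Finset (Fin n → Bool)) (x : Fin n → Bool) : ℝ :=
  ∑ B ∈ NIx n k A x, pcons g G A B

/-- `h(x) = ∑_{B ∈ N_I(A,x)} p_err(x,B) · p_used(x,B)` with `p_used(x,B) = p_cons(B)/p_tot(x)`. -/
noncomputable def hFn {n : ℕ} (g : (Fin n → Bool) → Bool)
    (G : Finset (Fin n → Bool) → ((Fin n → Bool) → Bool) → ℝ)
    (k : ℕ) (A : Finset (Fin n → Bool)) (x : Fin n → Bool) : ℝ :=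
  ∑ B ∈ NIx n k A x, perr g G A x B * (pcons g G A B / ptotx g G k A x)

/-- `μ(B') = E_{x ∼ uniform on B'∖A}[h(x)]`. -/
noncomputable def muFn {n : ℕ} (g : (Fin n → Bool) → Bool)
    (G : Finset (Fin n → Bool) → ((Fin n → Bool) → Bool) → ℝ)
    (k : ℕ) (A B' : Finset (Fin n → Bool)) : ℝ :=
  (∑ x ∈ B' \ A, hFn g G k A x) / ((B' \ A).card : ℝ)

/-- The bucket `Γ_i = {B' ∈ N_I(A) : 2^{-i-1} < p_cons(B') ≤ 2^{-i}}`. -/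
noncomputable def Gam {n : ℕ} (g : (Fin n → Bool) → Bool)
    (G : Finset (Fin n → Bool) → ((Fin n → Bool) → Bool) → ℝ)
    (k : ℕ) (A : Finset (Fin n → Bool)) (i : ℕ) : Finset (Finset (Fin n → Bool)) :=
  (NI n k A).filter fun B' =>
    ((2 : ℝ) ^ (i + 1))⁻¹ < pcons g G A B' ∧ pcons g G A B' ≤ ((2 : ℝ) ^ i)⁻¹

/-- The exceptional bucket `Γ_{ℓ+1} = {B' ∈ N_I(A) : p_cons(B') ≤ 2^{-ℓ-1}}`, where
`ℓ = ⌈5·log₂(1/(γη))⌉`. -/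
noncomputable def GamTop {n : ℕ} (g : (Fin n → Bool) → Bool)
    (G : Finset (Fin n → Bool) → ((Fin n → Bool) → Bool) → ℝ)
    (k : ℕ) (A : Finset (Fin n → Bool)) (γ η : ℝ) : Finset (Finset (Fin n → Bool)) :=
  (NI n k A).filter fun B' =>
    pcons g G A B' ≤ ((2 : ℝ) ^ (⌈5 * Real.logb 2 (1 / (γ * η))⌉₊ + 1))⁻¹

/-- The probability that one iteration of the decoder `C_{A,w}` on input `x ∉ A` halts,
i.e. that for `B'` uniform on `N_I(A,x)` and `v ∼ 𝒢(B')` we have `v|_A = w`. -/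
noncomputable def phalt {n : ℕ}
    (G : Finset (Fin n → Bool) → ((Fin n → Bool) → Bool) → ℝ)
    (k : ℕ) (A : Finset (Fin n → Bool)) (w : (Fin n → Bool) → Bool) (x : Fin n → Bool) : ℝ :=
  (∑ B ∈ NIx n k A x, prEvent (G B) fun v => ∀ a ∈ A, v a = w a) / ((NIx n k A x).card : ℝ)

/-- The probability that one iteration of the decoder `C_{A,w}` on input `x ∉ A` halts with
output bit `b`. -/
noncomputable def phaltBit {n : ℕ}
    (G : Finset (Fin n → Bool) → ((Fin n → Bool) → Bool) → ℝ)
    (k : ℕ) (A : Finset (Fin n → Bool)) (w : (Fin n → Bool) → Bool) (x : Fin n → Bool)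
    (b : Bool) : ℝ :=
  (∑ B ∈ NIx n k A x, prEvent (G B) fun v => (∀ a ∈ A, v a = w a) ∧ v x = b) /
    ((NIx n k A x).card : ℝ)

/-- The probability that the randomized decoder `C_{A,w}` with `T` iterations outputs the
bit `b` on input `x`.  For `x ∈ A` it deterministically outputs `w|_x`; otherwise, the `i`-th
iteration is reached with probability `(1 - phalt)^{i-1}` and halts with output `b` with
probability `phaltBit b`. -/
noncomputable def probOutEq {n : ℕ}
    (G : Finset (Fin n → Bool) → ((Fin n → Bool) → Bool) → ℝ)
    (k : ℕ) (A : Finset (Fin n → Bool)) (T : ℕ) (w : (Fin n → Bool) → Bool)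
    (x : Fin n → Bool) (b : Bool) : ℝ :=
  if x ∈ A then (if w x = b then 1 else 0)
  else phaltBit G k A w x b * ∑ i ∈ Finset.range T, (1 - phalt G k A w x) ^ i

/-- The probability that the randomized decoder `C_{A,w}` with `T` iterations outputs `⊥`
on input `x`. -/
noncomputable def probOutBot {n : ℕ}
    (G : Finset (Fin n → Bool) → ((Fin n → Bool) → Bool) → ℝ)
    (k : ℕ) (A : Finset (Fin n → Bool)) (T : ℕ) (w : (Fin n → Bool) → Bool)
    (x : Fin n → Bool) : ℝ :=
  if x ∈ A then 0 else (1 - phalt G k A w x) ^ T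

/-- `B''` is `A`-heavy: `Pr_{v ∼ 𝒢(B''), x ∼ uniform on B''∖A}[v|_x ≠ g(x) ∣ v|_A = g^{k/2}(A)]
  > α/2`. -/
noncomputable def IsHeavy {n : ℕ} (g : (Fin n → Bool) → Bool)
    (G : Finset (Fin n → Bool) → ((Fin n → Bool) → Bool) → ℝ)
    (A : Finset (Fin n → Bool)) (α : ℝ) (B'' : Finset (Fin n → Bool)) : Prop :=
  α / 2 <
    ((∑ x ∈ B'' \ A, prEvent (G B'') fun v => v x ≠ g x ∧ ∀ a ∈ A, v a = g a) /
        ((B'' \ A).card : ℝ)) / pcons g G A B''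

section Probability

variable {n : ℕ} {D : ((Fin n → Bool) → Bool) → ℝ}

lemma prEvent_nonneg (hD : ∀ v, 0 ≤ D v) (E : ((Fin n → Bool) → Bool) → Prop) :
    0 ≤ prEvent D E :=
  sum_nonneg fun v _ => by split_ifs <;> simp [hD v]

lemma prEvent_le_one (hD : ∀ v, 0 ≤ D v) (hD1 : ∑ v, D v = 1)
    (E : ((Fin n → Bool) → Bool) → Prop) : prEvent D E ≤ 1 :=
  hD1 ▸ sum_le_sum fun v _ => by split_ifs <;> simp [hD v]

lemma prEvent_mono (hD : ∀ v, 0 ≤ D v) {E E' : ((Fin n → Bool) → Bool) → Prop}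
    (h : ∀ v, E v → E' v) : prEvent D E ≤ prEvent D E' :=
  sum_le_sum fun v _ => by
    by_cases hE : E v
    · simp [hE, h v hE]
    · split_ifs <;> simp [hD v]

end Probability

section DyadicBuckets

variable {α : Type*} (s : Finset α) (p : α → ℝ)

noncomputable def dyadicBucket (i : ℕ) : Finset α :=
  s.filter fun x => ((2 : ℝ) ^ (i + 1))⁻¹ < p x ∧ p x ≤ ((2 : ℝ) ^ i)⁻¹

lemma pairwise_disjoint_dyadicBucket : Pairwise (Function.onFun Disjoint (dyadicBucket s p)) := by
  refine (pairwise_disjoint_on _).mpr fun i j hij => disjoint_left.mpr fun x hi hj => ?_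
  have hlow := (mem_filter.mp hi).2.1
  have hupp := (mem_filter.mp hj).2.2
  have : ((2 : ℝ) ^ j)⁻¹ ≤ ((2 : ℝ) ^ (i + 1))⁻¹ :=
    inv_anti₀ (by positivity) (pow_le_pow_right₀ one_le_two hij)
  linarith

lemma exists_dyadic_index_le {t : ℝ} {L : ℕ} (hlow : ((2 : ℝ) ^ (L + 1))⁻¹ < t) (ht : t ≤ 1) :
    ∃ i ≤ L, ((2 : ℝ) ^ (i + 1))⁻¹ < t ∧ t ≤ ((2 : ℝ) ^ i)⁻¹ := by
  have hex : ∃ j : ℕ, ((2 : ℝ) ^ (j + 1))⁻¹ < t := ⟨L, hlow⟩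
  refine ⟨Nat.find hex, Nat.find_le hlow, Nat.find_spec hex, ?_⟩
  rcases Nat.eq_zero_or_eq_succ_pred (Nat.find hex) with h0 | hsucc
  · simpa [h0] using ht
  · rw [hsucc]
    exact not_lt.mp (Nat.find_min hex (by omega))

lemma sum_dyadicBucket_le (i : ℕ) :
    ∑ x ∈ dyadicBucket s p i, p x ≤ #(dyadicBucket s p i) * ((2 : ℝ) ^ i)⁻¹ := by
  simpa using sum_le_card_nsmul (dyadicBucket s p i) p _ fun x hx => (mem_filter.mp hx).2.2

theorem sum_not_mem_large_dyadicBucket_le [DecidableEq α] (hp0 : ∀ x ∈ s, 0 ≤ p x)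
    (hp1 : ∀ x ∈ s, p x ≤ 1) {θ : ℝ} (hθ : 0 ≤ θ) (L : ℕ) :
    ∑ x ∈ s with ¬∃ i ≤ L, θ * #s ≤ #(dyadicBucket s p i) ∧ x ∈ dyadicBucket s p i, p x
      ≤ #s * ((2 : ℝ) ^ (L + 1))⁻¹ + 2 * θ * #s := by
  set T := s.filter fun x => ¬∃ i ≤ L, θ * #s ≤ #(dyadicBucket s p i) ∧ x ∈ dyadicBucket s p i
  set smallIdx := (range (L + 1)).filter fun i => ¬θ * #s ≤ #(dyadicBucket s p i)
  have hTs : T ⊆ s := filter_subset _ _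
  have htail : ∑ x ∈ T with p x ≤ ((2 : ℝ) ^ (L + 1))⁻¹, p x ≤ #s * ((2 : ℝ) ^ (L + 1))⁻¹ := by
    refine (sum_le_card_nsmul (T.filter fun x => p x ≤ ((2 : ℝ) ^ (L + 1))⁻¹) p _
      fun x hx => (mem_filter.mp hx).2).trans ?_
    rw [nsmul_eq_mul]
    gcongr
    exact fun x hx => hTs (mem_filter.mp hx).1
  have hcover : T.filter (fun x => ¬p x ≤ ((2 : ℝ) ^ (L + 1))⁻¹) ⊆
      smallIdx.biUnion (dyadicBucket s p) := by
    intro x hx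
    obtain ⟨hxT, hlow⟩ := mem_filter.mp hx
    obtain ⟨hxs, hnot⟩ := mem_filter.mp hxT
    obtain ⟨i, hiL, hi⟩ := exists_dyadic_index_le (not_le.mp hlow) (hp1 x hxs)
    have hxi : x ∈ dyadicBucket s p i := mem_filter.mpr ⟨hxs, hi⟩
    exact mem_biUnion.mpr ⟨i, mem_filter.mpr ⟨mem_range.mpr (by omega),
      fun hlarge => hnot ⟨i, hiL, hlarge, hxi⟩⟩, hxi⟩
  have hbuckets : ∑ x ∈ T with ¬p x ≤ ((2 : ℝ) ^ (L + 1))⁻¹, p x ≤ 2 * θ * #s :=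
    calc ∑ x ∈ T with ¬p x ≤ ((2 : ℝ) ^ (L + 1))⁻¹, p x
        ≤ ∑ x ∈ smallIdx.biUnion (dyadicBucket s p), p x :=
          sum_le_sum_of_subset_of_nonneg hcover fun x hx _ =>
            hp0 x (by obtain ⟨i, -, hxi⟩ := mem_biUnion.mp hx; exact (mem_filter.mp hxi).1)
      _ = ∑ i ∈ smallIdx, ∑ x ∈ dyadicBucket s p i, p x :=
          sum_biUnion ((pairwise_disjoint_dyadicBucket s p).set_pairwise _)
      _ ≤ ∑ i ∈ smallIdx, θ * #s * (1 / (2 : ℝ)) ^ i := by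
          refine sum_le_sum fun i hi => (sum_dyadicBucket_le s p i).trans ?_
          rw [one_div_pow, ← div_eq_mul_one_div, div_eq_mul_inv]
          gcongr
          exact (not_le.mp (mem_filter.mp hi).2).le
      _ ≤ ∑ i ∈ range (L + 1), θ * #s * (1 / (2 : ℝ)) ^ i :=
          sum_le_sum_of_subset_of_nonneg (filter_subset _ _) fun _ _ _ => by positivity
      _ ≤ 2 * θ * #s := by
          rw [← mul_sum, mul_comm 2 θ, mul_right_comm]
          gcongr
          exact sum_geometric_two_le _
  rw [← sum_filter_add_sum_filter_not T fun x => p x ≤ ((2 : ℝ) ^ (L + 1))⁻¹]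
  exact add_le_add htail hbuckets

theorem half_le_sum_large_dyadicBucket_div [DecidableEq α] (hs : s.Nonempty)
    (hp0 : ∀ x ∈ s, 0 ≤ p x) (hp1 : ∀ x ∈ s, p x ≤ 1) {c : ℝ} (hc0 : 0 < c) (hc : c ≤ 1 / 2)
    (hmass : c * #s ≤ ∑ x ∈ s, p x) {L : ℕ} (hL : ((2 : ℝ) ^ L)⁻¹ ≤ c ^ 5) :
    1 / 2 ≤ (∑ x ∈ s with ∃ i ≤ L, c ^ 5 * #s ≤ #(dyadicBucket s p i) ∧ x ∈ dyadicBucket s p i,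
      p x) / ∑ x ∈ s, p x := by
  have hcard : (0 : ℝ) < #s := by exact_mod_cast hs.card_pos
  have hsmallIdx := sum_not_mem_large_dyadicBucket_le s p hp0 hp1 (by positivity : 0 ≤ c ^ 5) L
  have htail : (#s : ℝ) * ((2 : ℝ) ^ (L + 1))⁻¹ ≤ #s * (c ^ 5 / 2) := by
    rw [pow_succ, mul_inv]
    gcongr
    linarith
  have hbulk : c ^ 5 * #s ≤ c / 5 * #s := by
    have : c ^ 4 ≤ (1 / 2) ^ 4 := pow_le_pow_left₀ hc0.le hc 4
    gcongr
    nlinarith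
  rw [le_div_iff₀ ((by positivity : 0 < c * #s).trans_le hmass)]
  rw [← sum_filter_add_sum_filter_not s
    fun x => ∃ i ≤ L, c ^ 5 * #s ≤ #(dyadicBucket s p i) ∧ x ∈ dyadicBucket s p i] at hmass ⊢
  linarith

end DyadicBuckets

lemma inv_two_pow_ceil_mul_logb_le (m : ℕ) {c : ℝ} (hc : 0 < c) :
    ((2 : ℝ) ^ ⌈m * Real.logb 2 (1 / c)⌉₊)⁻¹ ≤ c ^ m := by
  have hceil : Real.logb 2 (1 / c ^ m) ≤ ⌈m * Real.logb 2 (1 / c)⌉₊ := by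
    rw [← one_div_pow, Real.logb_pow]
    exact Nat.le_ceil _
  have h := (Real.logb_le_iff_le_rpow one_lt_two (by positivity)).mp hceil
  rw [Real.rpow_natCast] at h
  rwa [inv_le_comm₀ (by positivity) (by positivity), ← one_div]

lemma card_pos_of_le_div_card {β : Type*} {s : Finset β} {a γ : ℝ} (hγ : 0 < γ)
    (h : γ ≤ a / #s) : 0 < #s := by
  refine Nat.pos_of_ne_zero fun hs => ?_
  rw [hs, Nat.cast_zero, div_zero] at h
  linarith

lemma mul_mul_card_le_sum_of_le_div_card {β : Type*} {s : Finset β} {f p : β → ℝ} {γ η : ℝ}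
    (hp : ∀ x ∈ s, 0 ≤ p x) (hfp : ∀ x ∈ s, f x ≤ p x) (hγ : 0 < γ) (hη : 0 ≤ η)
    (h : γ ≤ #(s.filter fun x => η ≤ f x) / #s) : γ * η * #s ≤ ∑ x ∈ s, p x := by
  have hs : (0 : ℝ) < #s := by exact_mod_cast card_pos_of_le_div_card hγ h
  have hfrac : γ * #s ≤ #(s.filter fun x => η ≤ f x) := (le_div_iff₀ hs).mp h
  calc γ * η * #s = η * (γ * #s) := by ring
    _ ≤ #(s.filter fun x => η ≤ f x) * η := by rw [mul_comm _ η]; gcongr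
    _ ≤ ∑ x ∈ s with η ≤ f x, p x := by
        simpa using card_nsmul_le_sum (s.filter fun x => η ≤ f x) p η fun x hx =>
          (mem_filter.mp hx).2.trans (hfp x (mem_filter.mp hx).1)
    _ ≤ ∑ x ∈ s, p x := sum_le_sum_of_subset_of_nonneg (filter_subset _ _) fun x hx _ => hp x hx

section Edges

variable {n k : ℕ} {g : (Fin n → Bool) → Bool}
  {G : Finset (Fin n → Bool) → ((Fin n → Bool) → Bool) → ℝ} {A : Finset (Fin n → Bool)}

lemma corr_le_pcons {B : Finset (Fin n → Bool)} (hG : ∀ v, 0 ≤ G B v) (hAB : A ⊆ B) :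
    Corr g G B ≤ pcons g G A B :=
  prEvent_mono hG fun _ hv a ha => hv a (hAB ha)

lemma mul_mul_card_le_ptot {γ η : ℝ} {B : Finset (Fin n → Bool)}
    (hGnn : ∀ B ∈ Sk n k, ∀ v, 0 ≤ G B v) (hγ0 : 0 < γ) (hη0 : 0 ≤ η)
    (hgood : IsGood g G k γ η A B) : γ * η * #(NI n k A) ≤ ptot g G k A :=
  mul_mul_card_le_sum_of_le_div_card
    (fun B' hB' => prEvent_nonneg (hGnn B' (mem_filter.mp hB').1) _)
    (fun B' hB' => corr_le_pcons (hGnn B' (mem_filter.mp hB').1) (mem_filter.mp hB').2)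
    hγ0 hη0 hgood.2

end Edges

theorem large_buckets_carry_half_the_weight_general
    (n k : ℕ)
    (g : (Fin n → Bool) → Bool)
    (G : Finset (Fin n → Bool) → ((Fin n → Bool) → Bool) → ℝ)
    (hGnn : ∀ B ∈ Sk n k, ∀ v, 0 ≤ G B v)
    (hGsum : ∀ B ∈ Sk n k, ∑ v, G B v = 1)
    (γ η : ℝ) (hγ0 : 0 < γ) (hη0 : 0 < η) (hγ : γ ≤ 1 / 10) (hη : η ≤ 1 / 10)
    (A B : Finset (Fin n → Bool))
    (hgood : IsGood g G k γ η A B) :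
    1 / 2 ≤
      (∑ B' ∈ (NI n k A).filter fun B' =>
            ∃ i : ℕ, i ≤ ⌈5 * Real.logb 2 (1 / (γ * η))⌉₊ ∧
              (γ * η) ^ 5 * ((NI n k A).card : ℝ) ≤ ((Gam g G k A i).card : ℝ) ∧
              B' ∈ Gam g G k A i,
          pcons g G A B') / ptot g G k A := by
  have hSk : ∀ B' ∈ NI n k A, B' ∈ Sk n k := fun B' hB' => (mem_filter.mp hB').1
  refine half_le_sum_large_dyadicBucket_div (NI n k A) (pcons g G A)
    (card_pos.mp (card_pos_of_le_div_card hγ0 hgood.2))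
    (fun B' hB' => prEvent_nonneg (hGnn B' (hSk B' hB')) _)
    (fun B' hB' => prEvent_le_one (hGnn B' (hSk B' hB')) (hGsum B' (hSk B' hB')) _)
    (mul_pos hγ0 hη0) (by nlinarith) (mul_mul_card_le_ptot hGnn hγ0 hη0.le hgood) ?_
  simpa using inv_two_pow_ceil_mul_logb_le 5 (mul_pos hγ0 hη0)

/-- Assume `γ, η ≤ 1/10` and let `(A,B) ∈ I` be a `(γ,η)`-good edge.
Then a random `B' ∼ W_I(A)` belongs to a large bucket `Γ_i` (i.e. one with
`|Γ_i| ≥ (γη)^5·|N_I(A)|`) for some `0 ≤ i ≤ ℓ` (with `ℓ = ⌈5·log₂(1/(γη))⌉`) with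
probability at least `1/2`. -/
theorem large_buckets_carry_half_the_weight
    (n k : ℕ) (hn : 0 < n) (hk : 0 < k) (hkeven : Even k) (hk2 : k ≤ 2 ^ n)
    (g : (Fin n → Bool) → Bool)
    (G : Finset (Fin n → Bool) → ((Fin n → Bool) → Bool) → ℝ)
    (hGnn : ∀ B ∈ Sk n k, ∀ v, 0 ≤ G B v)
    (hGsum : ∀ B ∈ Sk n k, ∑ v, G B v = 1)
    (hGpos : ∀ B ∈ Sk n k, 0 < Corr g G B)
    (γ η : ℝ) (hγ0 : 0 < γ) (hη0 : 0 < η) (hγ : γ ≤ 1 / 10) (hη : η ≤ 1 / 10)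
    (A B : Finset (Fin n → Bool)) (hAB : (A, B) ∈ Edges n k)
    (hgood : IsGood g G k γ η A B) :
    1 / 2 ≤
      (∑ B' ∈ (NI n k A).filter fun B' =>
            ∃ i : ℕ, i ≤ ⌈5 * Real.logb 2 (1 / (γ * η))⌉₊ ∧
              (γ * η) ^ 5 * ((NI n k A).card : ℝ) ≤ ((Gam g G k A i).card : ℝ) ∧
              B' ∈ Gam g G k A i,
          pcons g G A B') / ptot g G k A :=
  large_buckets_carry_half_the_weight_general n k g G hGnn hGsum γ η hγ0 hη0 hγ hη A B hgood

end IJKW
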